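/- If a p×p real matrix C is both separable positive definite (C = Σ2 ⊛ Σ1 for some symmetric positive definite Σ1, Σ2) and a core covariance matrix (P1(C, I_{p2}) = p2·I_{p1} and P2(C, I_{p1}) = p1·I_{p2}), then C = I_p. That is, the intersection of the separable positive definite matrices and the core covariance matrices is exactly the identity matrix. -/

import Mathlib

/-!
If `C = Σ₂ ⊛ Σ₁`, the two core conditions read `tr Σ₂ • Σ₁ = p₂ • I` and
`tr Σ₁ • Σ₂ = p₁ • I`. Taking traces gives `tr Σ₁ · tr Σ₂ = p₁ p₂`, and taking the Kronecker
product of the two conditions gives `(tr Σ₁ · tr Σ₂) • C = (p₁ p₂) • I`, so `C = I` after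
cancelling `p₁ p₂ = p` (for `p = 0` there is nothing to prove).
-/

open Matrix BigOperators Filter

/-- The separable (Kronecker) product `M2 ⊛ M1`: entry at `((i,j),(i',j'))` is
`M1 i i' * M2 j j'`. -/
noncomputable def sep {p1 p2 : ℕ} (M1 : Matrix (Fin p1) (Fin p1) ℝ)
    (M2 : Matrix (Fin p2) (Fin p2) ℝ) :
    Matrix (Fin p1 × Fin p2) (Fin p1 × Fin p2) ℝ :=
  fun x y => M1 x.1 y.1 * M2 x.2 y.2

/-- A `p × p` matrix is separable positive definite if it is the separable product of
two symmetric positive definite matrices. -/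
def SepPD {p1 p2 : ℕ} (K : Matrix (Fin p1 × Fin p2) (Fin p1 × Fin p2) ℝ) : Prop :=
  ∃ (S1 : Matrix (Fin p1) (Fin p1) ℝ) (S2 : Matrix (Fin p2) (Fin p2) ℝ),
    S1.PosDef ∧ S2.PosDef ∧ K = sep S1 S2

/-- The divergence `d(K : S) = log det K + trace (K⁻¹ S)`. -/
noncomputable def dvg {ι : Type*} [Fintype ι] [DecidableEq ι] (K S : Matrix ι ι ℝ) : ℝ :=
  Real.log K.det + (K⁻¹ * S).trace

/-- `P1 S B` has entries `∑_{j,j'} B j j' * S (i,j) (i',j')`. -/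
noncomputable def P1 {p1 p2 : ℕ} (S : Matrix (Fin p1 × Fin p2) (Fin p1 × Fin p2) ℝ)
    (B : Matrix (Fin p2) (Fin p2) ℝ) : Matrix (Fin p1) (Fin p1) ℝ :=
  fun i i' => ∑ j, ∑ j', B j j' * S (i, j) (i', j')

/-- `P2 S A` has entries `∑_{i,i'} A i i' * S (i,j) (i',j')`. -/
noncomputable def P2 {p1 p2 : ℕ} (S : Matrix (Fin p1 × Fin p2) (Fin p1 × Fin p2) ℝ)
    (A : Matrix (Fin p1) (Fin p1) ℝ) : Matrix (Fin p2) (Fin p2) ℝ :=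
  fun j j' => ∑ i, ∑ i', A i i' * S (i, j) (i', j')

open scoped Kronecker

lemma sep_eq_kronecker {p1 p2 : ℕ} (M1 : Matrix (Fin p1) (Fin p1) ℝ)
    (M2 : Matrix (Fin p2) (Fin p2) ℝ) : sep M1 M2 = M1 ⊗ₖ M2 :=
  rfl

lemma P1_sep_one {p1 p2 : ℕ} (M1 : Matrix (Fin p1) (Fin p1) ℝ)
    (M2 : Matrix (Fin p2) (Fin p2) ℝ) : P1 (sep M1 M2) 1 = M2.trace • M1 := by
  ext i i'
  simp [P1, sep, one_apply, trace, Finset.mul_sum, mul_comm]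

lemma P2_sep_one {p1 p2 : ℕ} (M1 : Matrix (Fin p1) (Fin p1) ℝ)
    (M2 : Matrix (Fin p2) (Fin p2) ℝ) : P2 (sep M1 M2) 1 = M1.trace • M2 := by
  ext j j'
  simp [P2, sep, one_apply, trace, Finset.sum_mul]

namespace Matrix

variable {R : Type*} [Field R] [CharZero R]

lemma eq_of_card_smul_eq {ι : Type*} [Fintype ι] {A B : Matrix ι ι R}
    (h : (Fintype.card ι : R) • A = (Fintype.card ι : R) • B) : A = B := by
  cases isEmpty_or_nonempty ι
  · exact Subsingleton.elim A B
  · exact smul_right_injective _ (Nat.cast_ne_zero.mpr Fintype.card_ne_zero) h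

lemma kronecker_eq_one_of_trace_smul_eq {m n : Type*} [Fintype m] [Fintype n]
    [DecidableEq m] [DecidableEq n] {A : Matrix m m R} {B : Matrix n n R}
    (hA : B.trace • A = (Fintype.card n : R) • 1)
    (hB : A.trace • B = (Fintype.card m : R) • 1) : A ⊗ₖ B = 1 := by
  have htrace : A.trace * B.trace = Fintype.card m * Fintype.card n := by
    simpa [trace_smul, trace_one, mul_comm] using congrArg trace hA
  apply eq_of_card_smul_eq
  calc ((Fintype.card (m × n) : ℕ) : R) • A ⊗ₖ B = (A.trace * B.trace) • A ⊗ₖ B := by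
        rw [htrace, Fintype.card_prod, Nat.cast_mul]
    _ = (B.trace • A) ⊗ₖ (A.trace • B) := by
        rw [smul_kronecker, kronecker_smul, smul_smul, mul_comm]
    _ = ((Fintype.card (m × n) : ℕ) : R) • 1 := by
        rw [hA, hB, smul_kronecker, kronecker_smul, smul_smul, one_kronecker_one,
          Fintype.card_prod, Nat.cast_mul, mul_comm]

end Matrix

theorem stmt11_general (p1 p2 : ℕ)
    (C : Matrix (Fin p1 × Fin p2) (Fin p1 × Fin p2) ℝ)
    (hsep : SepPD C)
    (hcore1 : P1 C (1 : Matrix (Fin p2) (Fin p2) ℝ) = (p2 : ℝ) • (1 : Matrix (Fin p1) (Fin p1) ℝ))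
    (hcore2 : P2 C (1 : Matrix (Fin p1) (Fin p1) ℝ) = (p1 : ℝ) • (1 : Matrix (Fin p2) (Fin p2) ℝ)) :
    C = 1 := by
  obtain ⟨S1, S2, -, -, rfl⟩ := hsep
  rw [P1_sep_one] at hcore1
  rw [P2_sep_one] at hcore2
  rw [sep_eq_kronecker]
  exact kronecker_eq_one_of_trace_smul_eq (by simpa using hcore1) (by simpa using hcore2)

theorem stmt11 (p1 p2 : ℕ) (hp1 : 0 < p1) (hp2 : 0 < p2)
    (C : Matrix (Fin p1 × Fin p2) (Fin p1 × Fin p2) ℝ)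
    (hsep : SepPD C)
    (hcore1 : P1 C (1 : Matrix (Fin p2) (Fin p2) ℝ) = (p2 : ℝ) • (1 : Matrix (Fin p1) (Fin p1) ℝ))
    (hcore2 : P2 C (1 : Matrix (Fin p1) (Fin p1) ℝ) = (p1 : ℝ) • (1 : Matrix (Fin p2) (Fin p2) ℝ)) :
    C = 1 :=
  stmt11_general p1 p2 C hsep hcore1 hcore2
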